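/- arXiv:2502.18608 — 3 statements merged into one kernel-verified Lean document; each statement's English description precedes it below -/
import Mathlib

section
/- With the inverse-transform selection function S as defined, for any distribution p, key ξ ∈ (0,1], and permutation π, we have S(p, ξ, π) = S(p, 1−ξ, reverse(π)) whenever ξ is not equal to any cumulative sum C_k of p under π (i.e., for ξ avoiding a finite set of exceptional values), where reverse(π)(i) = π(|V|+1−i). -/
open Finset MeasureTheory
open scoped Classical

variable {V : Type*}

/-- Cumulative sum of probabilities of the first `k` tokens under permutation `π`. -/
noncomputable def cdf [Fintype V] (p : V → ℝ) (π : Fin (Fintype.card V) ≃ V) (k : ℕ) : ℝ :=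
  ∑ i ∈ Finset.univ.filter (fun i : Fin (Fintype.card V) => (i : ℕ) < k), p (π i)

/-- The least index `k` (if any) such that `C_{k+1} ≥ ξ` (0-indexed). -/
noncomputable def selIdx [Fintype V] (p : V → ℝ) (ξ : ℝ)
    (π : Fin (Fintype.card V) ≃ V) : Option (Fin (Fintype.card V)) :=
  let s := Finset.univ.filter (fun k : Fin (Fintype.card V) => ξ ≤ cdf p π ((k : ℕ) + 1))
  if h : s.Nonempty then some (s.min' h) else none

/-- The inverse-transform-sampling selection function `S(p, ξ, π)`. -/
noncomputable def sel [Fintype V] [Nonempty V] (p : V → ℝ) (ξ : ℝ)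
    (π : Fin (Fintype.card V) ≃ V) : V :=
  ((selIdx p ξ π).map π).getD (Classical.arbitrary V)

/-- The reversed permutation: `reverse(π)(i) = π(n+1-i)` (1-indexed). -/
def revp [Fintype V] (π : Fin (Fintype.card V) ≃ V) : Fin (Fintype.card V) ≃ V :=
  Fin.revPerm.trans π

lemma cdf_zero [Fintype V] (p : V → ℝ) (π : Fin (Fintype.card V) ≃ V) : cdf p π 0 = 0 := by
  simp [cdf]

lemma cdf_card [Fintype V] (p : V → ℝ) (hp1 : ∑ v, p v = 1)
    (π : Fin (Fintype.card V) ≃ V) : cdf p π (Fintype.card V) = 1 := by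
  rw [cdf, Finset.filter_true_of_mem (fun i _ => i.isLt), ← hp1]
  exact Equiv.sum_comp π p

lemma cdf_mono [Fintype V] (p : V → ℝ) (hp0 : ∀ v, 0 ≤ p v)
    (π : Fin (Fintype.card V) ≃ V) {k l : ℕ} (h : k ≤ l) : cdf p π k ≤ cdf p π l := by
  apply Finset.sum_le_sum_of_subset_of_nonneg
  · intro i hi
    simp only [Finset.mem_filter, Finset.mem_univ, true_and] at hi ⊢
    omega
  · intro i _ _
    exact hp0 _

lemma cdf_rev [Fintype V] (p : V → ℝ) (hp1 : ∑ v, p v = 1)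
    (π : Fin (Fintype.card V) ≃ V) {k : ℕ} (hk : k ≤ Fintype.card V) :
    cdf p (revp π) k = 1 - cdf p π (Fintype.card V - k) := by
  have h1 : cdf p (revp π) k
      = ∑ j ∈ Finset.univ.filter (fun j : Fin (Fintype.card V) =>
          ¬ ((j : ℕ) < Fintype.card V - k)), p (π j) := by
    rw [cdf]
    refine Finset.sum_nbij' (fun i => Fin.rev i) (fun j => Fin.rev j) ?_ ?_ ?_ ?_ ?_
    · intro i hi
      simp only [Finset.mem_filter, Finset.mem_univ, true_and, Fin.val_rev] at hi ⊢
      have := i.isLt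
      omega
    · intro j hj
      simp only [Finset.mem_filter, Finset.mem_univ, true_and, Fin.val_rev] at hj ⊢
      have := j.isLt
      omega
    · intro i _; exact Fin.rev_rev i
    · intro j _; exact Fin.rev_rev j
    · intro i _
      simp [revp, Fin.revPerm]
  have h2 : cdf p π (Fintype.card V - k)
      + ∑ j ∈ Finset.univ.filter (fun j : Fin (Fintype.card V) =>
          ¬ ((j : ℕ) < Fintype.card V - k)), p (π j) = 1 := by
    rw [cdf, Finset.sum_filter_add_sum_filter_not, ← hp1]
    exact Equiv.sum_comp π p
  rw [h1]
  linarith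

/-- reverse symmetry of the selection function away from the
exceptional values `C_0, …, C_n`. -/
theorem stmt1 [Fintype V] [Nonempty V] (p : V → ℝ)
    (hp0 : ∀ v, 0 ≤ p v) (hp1 : ∑ v, p v = 1)
    (π : Fin (Fintype.card V) ≃ V) (ξ : ℝ) (hξ0 : 0 < ξ) (hξ1 : ξ ≤ 1)
    (hex : ∀ k ≤ Fintype.card V, ξ ≠ cdf p π k) :
    sel p ξ π = sel p (1 - ξ) (revp π) := by
  classical
  have hn0 : 0 < Fintype.card V := Fintype.card_pos
  have hcdfn : cdf p π (Fintype.card V) = 1 := cdf_card p hp1 π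
  -- first set
  have hs1 : (Finset.univ.filter
      (fun k : Fin (Fintype.card V) => ξ ≤ cdf p π ((k : ℕ) + 1))).Nonempty := by
    refine ⟨⟨Fintype.card V - 1, by omega⟩, ?_⟩
    simp only [Finset.mem_filter, Finset.mem_univ, true_and]
    have he : (Fintype.card V - 1) + 1 = Fintype.card V := by omega
    rw [he, hcdfn]
    exact hξ1
  set k₀ := (Finset.univ.filter
      (fun k : Fin (Fintype.card V) => ξ ≤ cdf p π ((k : ℕ) + 1))).min' hs1 with hk₀
  have hk₀mem := Finset.min'_mem _ hs1
  have hk₀le : ξ ≤ cdf p π ((k₀ : ℕ) + 1) := (Finset.mem_filter.mp hk₀mem).2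
  have hk₀min : ∀ j : Fin (Fintype.card V), ξ ≤ cdf p π ((j : ℕ) + 1) → k₀ ≤ j := by
    intro j hj
    have hjmem : j ∈ Finset.univ.filter
        (fun k : Fin (Fintype.card V) => ξ ≤ cdf p π ((k : ℕ) + 1)) := by
      simp only [Finset.mem_filter, Finset.mem_univ, true_and]; exact hj
    exact Finset.min'_le _ j hjmem
  have hcdfk₀ : cdf p π (k₀ : ℕ) < ξ := by
    rcases Nat.eq_zero_or_pos (k₀ : ℕ) with h0 | h0
    · rw [h0, cdf_zero]; exact hξ0
    · by_contra h
      push_neg at h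
      have hm := hk₀min ⟨(k₀ : ℕ) - 1, by omega⟩
        (by simpa [Nat.sub_add_cancel h0] using h)
      rw [Fin.le_def] at hm
      simp at hm
      omega
  -- second set
  have hs2 : (Finset.univ.filter
      (fun k : Fin (Fintype.card V) => 1 - ξ ≤ cdf p (revp π) ((k : ℕ) + 1))).Nonempty := by
    refine ⟨⟨Fintype.card V - 1, by omega⟩, ?_⟩
    simp only [Finset.mem_filter, Finset.mem_univ, true_and]
    have he : (Fintype.card V - 1) + 1 = Fintype.card V := by omega
    rw [he, cdf_rev p hp1 π le_rfl]
    simp only [Nat.sub_self, cdf_zero]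
    linarith
  set k₁ := (Finset.univ.filter
      (fun k : Fin (Fintype.card V) => 1 - ξ ≤ cdf p (revp π) ((k : ℕ) + 1))).min' hs2 with hk₁
  have hk₁mem := Finset.min'_mem _ hs2
  have hk₁le : 1 - ξ ≤ cdf p (revp π) ((k₁ : ℕ) + 1) := (Finset.mem_filter.mp hk₁mem).2
  have hk₀lt : (k₀ : ℕ) < Fintype.card V := k₀.isLt
  have hk₁lt : (k₁ : ℕ) < Fintype.card V := k₁.isLt
  -- k₁ ≤ n - 1 - k₀
  have hub : (k₁ : ℕ) ≤ Fintype.card V - 1 - (k₀ : ℕ) := by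
    have hm : 1 - ξ ≤ cdf p (revp π)
        ((((⟨Fintype.card V - 1 - (k₀ : ℕ), by omega⟩ : Fin (Fintype.card V))) : ℕ) + 1) := by
      show 1 - ξ ≤ cdf p (revp π) ((Fintype.card V - 1 - (k₀ : ℕ)) + 1)
      rw [cdf_rev p hp1 π (by omega : (Fintype.card V - 1 - (k₀ : ℕ)) + 1 ≤ Fintype.card V)]
      have he : Fintype.card V - ((Fintype.card V - 1 - (k₀ : ℕ)) + 1) = (k₀ : ℕ) := by omega
      rw [he]
      linarith
    have hjmem : (⟨Fintype.card V - 1 - (k₀ : ℕ), by omega⟩ : Fin (Fintype.card V)) ∈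
        Finset.univ.filter
        (fun k : Fin (Fintype.card V) => 1 - ξ ≤ cdf p (revp π) ((k : ℕ) + 1)) := by
      simp only [Finset.mem_filter, Finset.mem_univ, true_and]; exact hm
    have h := Finset.min'_le _ _ hjmem
    rw [Fin.le_def] at h
    exact h
  -- n - 1 - k₀ ≤ k₁
  have hlb : Fintype.card V - 1 - (k₀ : ℕ) ≤ (k₁ : ℕ) := by
    have h1 : cdf p π (Fintype.card V - 1 - (k₁ : ℕ)) ≤ ξ := by
      rw [cdf_rev p hp1 π (by omega : (k₁ : ℕ) + 1 ≤ Fintype.card V)] at hk₁le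
      have he : Fintype.card V - ((k₁ : ℕ) + 1) = Fintype.card V - 1 - (k₁ : ℕ) := by omega
      rw [he] at hk₁le
      linarith
    have h2 : cdf p π (Fintype.card V - 1 - (k₁ : ℕ)) < ξ :=
      lt_of_le_of_ne h1 (fun h => hex _ (by omega) h.symm)
    by_contra h
    push_neg at h
    have h3 : (k₀ : ℕ) + 1 ≤ Fintype.card V - 1 - (k₁ : ℕ) := by omega
    have := cdf_mono p hp0 π h3
    linarith
  have hk₁val : (k₁ : ℕ) = Fintype.card V - 1 - (k₀ : ℕ) := le_antisymm hub hlb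
  -- conclude
  have hsel1 : sel p ξ π = π k₀ := by
    rw [sel, selIdx]
    simp only [dif_pos hs1]
    rfl
  have hsel2 : sel p (1 - ξ) (revp π) = revp π k₁ := by
    rw [sel, selIdx]
    simp only [dif_pos hs2]
    rfl
  rw [hsel1, hsel2, revp]
  simp only [Equiv.trans_apply, Fin.revPerm_apply]
  congr 1
  rw [Fin.ext_iff, Fin.val_rev]
  omega
end

section
/- If two permutations π¹, π² of a finite set V with |V| ≥ 3 are neither equal nor reverses of each other, then there exist distinct elements a, b, c ∈ V such that b lies strictly between a and c in the ordering induced by π¹ but not in the ordering induced by π². -/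
open Finset MeasureTheory
open scoped Classical

variable {V : Type*}

/-- `b` lies strictly between `a` and `c` in the ordering induced by `π`. -/
def BtwPerm [Fintype V] (π : Fin (Fintype.card V) ≃ V) (a b c : V) : Prop :=
  (π.symm a < π.symm b ∧ π.symm b < π.symm c) ∨
  (π.symm c < π.symm b ∧ π.symm b < π.symm a)

lemma myaux {n : ℕ} (f : Fin n ≃ Fin n)
    (H : ∀ i j k : Fin n, i < j → j < k →
      (f i < f j ∧ f j < f k) ∨ (f k < f j ∧ f j < f i))
    (h0 : 0 < n) (h1 : 1 < n) (h01 : f ⟨0, h0⟩ < f ⟨1, h1⟩) :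
    ∀ i, f i = i := by
  have step : ∀ m (hm : m + 1 < n), f ⟨m, by omega⟩ < f ⟨m + 1, hm⟩ := by
    intro m
    induction m with
    | zero => intro hm; exact h01
    | succ m ih =>
      intro hm
      have hm' : m + 1 < n := by omega
      have hprev := ih hm'
      rcases H ⟨m, by omega⟩ ⟨m + 1, hm'⟩ ⟨m + 2, hm⟩
          (by simp [Fin.lt_def]) (by simp [Fin.lt_def]) with ⟨_, h⟩ | ⟨_, h⟩
      · exact h
      · exact absurd hprev (not_lt.2 h.le)
  have key : ∀ (d : ℕ) (i j : Fin n), (j : ℕ) = (i : ℕ) + d + 1 → f i < f j := by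
    intro d
    induction d with
    | zero =>
      intro i j hd
      have hj : (i : ℕ) + 1 < n := by omega
      have hje : j = ⟨(i : ℕ) + 1, hj⟩ := Fin.val_injective (by simpa using hd)
      rw [hje]
      simpa using step i hj
    | succ d ih =>
      intro i j hd
      have hm : (i : ℕ) + d + 1 < n := by omega
      have h1' := ih i ⟨(i : ℕ) + d + 1, hm⟩ rfl
      have h2' := step ((i : ℕ) + d + 1) (by omega)
      have hje : j = ⟨(i : ℕ) + d + 1 + 1, by omega⟩ := Fin.val_injective (by simp; omega)
      rw [hje]
      exact h1'.trans h2'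
  have hsm : StrictMono f := by
    intro i j hij
    exact key ((j : ℕ) - (i : ℕ) - 1) i j (by have := Fin.lt_def.1 hij; omega)
  haveI : WellFoundedLT (Fin n) := Finite.to_wellFoundedLT
  have hrange : Set.range ⇑f = Set.range (id : Fin n → Fin n) := by
    simp [f.surjective.range_eq]
  have := (hsm.range_inj strictMono_id).1 hrange
  intro i; exact congrFun this i

/-- two permutations that are neither equal nor mutual reverses
disagree on some betweenness relation. -/
theorem stmt6 [Fintype V] (h3 : 3 ≤ Fintype.card V)
    (π1 π2 : Fin (Fintype.card V) ≃ V) (hne : π1 ≠ π2) (hrev : π1 ≠ revp π2) :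
    ∃ a b c : V, a ≠ b ∧ b ≠ c ∧ a ≠ c ∧ BtwPerm π1 a b c ∧ ¬ BtwPerm π2 a b c := by
  by_contra hc
  push_neg at hc
  let f : Fin (Fintype.card V) ≃ Fin (Fintype.card V) := π1.trans π2.symm
  have H : ∀ i j k : Fin (Fintype.card V), i < j → j < k →
      (f i < f j ∧ f j < f k) ∨ (f k < f j ∧ f j < f i) := by
    intro i j k hij hjk
    have hab : π1 i ≠ π1 j := fun h => absurd (π1.injective h) hij.ne
    have hbc : π1 j ≠ π1 k := fun h => absurd (π1.injective h) hjk.ne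
    have hac : π1 i ≠ π1 k := fun h => absurd (π1.injective h) (hij.trans hjk).ne
    have hb1 : BtwPerm π1 (π1 i) (π1 j) (π1 k) :=
      Or.inl ⟨by simpa using hij, by simpa using hjk⟩
    have h2 := hc (π1 i) (π1 j) (π1 k) hab hbc hac hb1
    unfold BtwPerm at h2
    simpa [f, Equiv.trans_apply] using h2
  have h0 : 0 < Fintype.card V := by omega
  have h1 : 1 < Fintype.card V := by omega
  rcases lt_trichotomy (f ⟨0, h0⟩) (f ⟨1, h1⟩) with hlt | heq | hgt
  · have hid := myaux f H h0 h1 hlt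
    apply hne
    apply Equiv.ext
    intro i
    have h : π2.symm (π1 i) = i := hid i
    calc π1 i = π2 (π2.symm (π1 i)) := (π2.apply_symm_apply _).symm
    _ = π2 i := by rw [h]
  · exact absurd (f.injective heq) (by simp [Fin.ext_iff])
  · let g := f.trans Fin.revPerm
    have hgdef : ∀ x, g x = (f x).rev := fun x => rfl
    have H2 : ∀ i j k : Fin (Fintype.card V), i < j → j < k →
        (g i < g j ∧ g j < g k) ∨ (g k < g j ∧ g j < g i) := by
      intro i j k hij hjk
      rcases H i j k hij hjk with ⟨ha, hb⟩ | ⟨ha, hb⟩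
      · exact Or.inr ⟨by simpa [hgdef, Fin.rev_lt_rev] using hb,
          by simpa [hgdef, Fin.rev_lt_rev] using ha⟩
      · exact Or.inl ⟨by simpa [hgdef, Fin.rev_lt_rev] using hb,
          by simpa [hgdef, Fin.rev_lt_rev] using ha⟩
    have h01 : g ⟨0, h0⟩ < g ⟨1, h1⟩ := by
      rw [hgdef, hgdef, Fin.rev_lt_rev]
      exact hgt
    have hid := myaux g H2 h0 h1 h01
    apply hrev
    apply Equiv.ext
    intro i
    have h : (f i).rev = i := hid i
    have hf : f i = i.rev := by simpa using congrArg Fin.rev h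
    have h2 : π2.symm (π1 i) = i.rev := hf
    calc π1 i = π2 (π2.symm (π1 i)) := (π2.apply_symm_apply _).symm
    _ = π2 i.rev := by rw [h2]
    _ = revp π2 i := rfl
end

section
/- (Main identifiability theorem.) Let V be finite with |V| ≥ 3, ξ, ξ̂ ∈ (0,1), and π, π̂ permutations of V. Suppose S(p, ξ, π) = S(p, ξ̂, π̂) for all probability distributions p on V outside a set of measure zero in the simplex Δ(V). Then either (i) π = π̂ and ξ = ξ̂, or (ii) π = reverse(π̂) and ξ = 1 − ξ̂. -/
/-!
Both selections are locally constant near any distribution at which the key falls strictly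
inside a step of the cumulative sums, and such neighbourhoods in the simplex are not null for
the `(|V| - 1)`-dimensional Hausdorff measure; so at every such distribution, even one on the
boundary of the simplex, both select the same token.

On the distribution with mass `t` on `u` and `1 - t` on `v`, the token `u` is selected once `t`
exceeds a threshold, `ξ` or `1 - ξ` according to whether `u` comes before or after `v`. Equal
thresholds force `ξ ∈ {ξ̂, 1 - ξ̂}` and, unless `ξ̂ = 1 / 2`, that `π̂⁻¹ ∘ π` preserves the order
of all pairs or reverses all of them. When `ξ = ξ̂ = 1 / 2`, mass `1 / 3` on each of three
tokens selects their median, so `π̂⁻¹ ∘ π` preserves betweenness, hence is monotone or antitone.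
-/

open Finset MeasureTheory
open scoped Classical

variable {V : Type*}

section Order

theorem Fin.strictMono_of_mem_uIoo {α : Type*} [LinearOrder α] {n : ℕ} {f : Fin (n + 2) → α}
    (hbtw : ∀ i j k, i < j → j < k → f j ∈ Set.uIoo (f i) (f k)) (h01 : f 0 < f 1) :
    StrictMono f := by
  rw [Fin.strictMono_iff_lt_succ]
  intro i
  induction i using Fin.induction with
  | zero => exact h01
  | succ i ih =>
    have := hbtw i.castSucc.castSucc i.castSucc.succ i.succ.succ Fin.castSucc_lt_succ
      (Fin.succ_lt_succ_iff.2 Fin.castSucc_lt_succ)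
    rw [← Fin.succ_castSucc]
    rw [Set.uIoo_eq_union] at this
    rcases this with h | h
    · exact h.2
    · exact absurd ih (lt_asymm h.2)

theorem Fin.strictMono_or_strictAnti_of_mem_uIoo {α : Type*} [LinearOrder α] {n : ℕ}
    {f : Fin n → α} (hf : Function.Injective f)
    (hbtw : ∀ i j k, i < j → j < k → f j ∈ Set.uIoo (f i) (f k)) :
    StrictMono f ∨ StrictAnti f := by
  rcases n with _ | _ | n
  · exact Or.inl (Subsingleton.strictMono (α := Fin 0) f)
  · exact Or.inl (Subsingleton.strictMono (α := Fin 1) f)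
  rcases (hf.ne (show (0 : Fin (n + 2)) ≠ 1 by simp)).lt_or_gt with h01 | h10
  · exact Or.inl (Fin.strictMono_of_mem_uIoo hbtw h01)
  · refine Or.inr (strictMono_toDual_comp_iff.1 (Fin.strictMono_of_mem_uIoo ?_ h10))
    intro i j k hij hjk
    simpa using hbtw i j k hij hjk

theorem Equiv.eq_of_strictMono_trans_symm {α β : Type*} [LinearOrder α] [Finite α]
    {e e' : α ≃ β} (h : StrictMono (e.trans e'.symm)) : e = e' :=
  Equiv.ext fun a => by simpa using congrArg e' (h.apply_eq (x := a))

theorem eq_revp_of_strictAnti [Fintype V] {π πh : Fin (Fintype.card V) ≃ V}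
    (h : StrictAnti (π.trans πh.symm)) : π = revp πh :=
  Equiv.eq_of_strictMono_trans_symm (Fin.rev_strictAnti.comp h)

end Order

section Selection

variable [Fintype V]

theorem cdf_mono_s7 {p : V → ℝ} (hp : ∀ v, 0 ≤ p v) (π : Fin (Fintype.card V) ≃ V) :
    Monotone (cdf p π) := fun _ _ hab =>
  Finset.sum_le_sum_of_subset_of_nonneg
    (Finset.monotone_filter_right _ fun _ _ hi => hi.trans_le hab) fun _ _ _ => hp _

theorem continuous_cdf (π : Fin (Fintype.card V) ≃ V) (k : ℕ) :
    Continuous fun p : V → ℝ => cdf p π k := by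
  unfold cdf
  fun_prop

theorem cdf_add (p q : V → ℝ) (π : Fin (Fintype.card V) ≃ V) (k : ℕ) :
    cdf (p + q) π k = cdf p π k + cdf q π k :=
  Finset.sum_add_distrib

theorem cdf_single (w : V) (r : ℝ) (π : Fin (Fintype.card V) ≃ V) (k : ℕ) :
    cdf (Pi.single w r) π k = if (π.symm w : ℕ) < k then r else 0 := by
  simp only [cdf, Pi.single_apply, ← Equiv.eq_symm_apply]
  rw [Finset.sum_ite_eq']
  simp

theorem sel_eq_of_cdf_lt_of_le [Nonempty V] {p : V → ℝ} (hp : ∀ v, 0 ≤ p v) {ξ : ℝ}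
    {π : Fin (Fintype.card V) ≃ V} {k : Fin (Fintype.card V)} (hlt : cdf p π k < ξ)
    (hle : ξ ≤ cdf p π (k + 1)) : sel p ξ π = π k := by
  have hk : k ∈ Finset.univ.filter fun j : Fin (Fintype.card V) => ξ ≤ cdf p π (j + 1) := by
    simpa using hle
  have hmin : (Finset.univ.filter fun j : Fin (Fintype.card V) => ξ ≤ cdf p π (j + 1)).min'
      ⟨k, hk⟩ = k := by
    refine le_antisymm (Finset.min'_le _ _ hk) (Finset.le_min' _ _ _ fun j hj => ?_)
    by_contra! hjk
    have := cdf_mono_s7 hp π (Nat.succ_le_of_lt hjk)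
    have := (Finset.mem_filter.1 hj).2
    linarith
  have hidx : selIdx p ξ π = some k := (dif_pos ⟨k, hk⟩).trans (congrArg some hmin)
  rw [sel, hidx]
  rfl

def threshold (ξ : ℝ) (π : Fin (Fintype.card V) ≃ V) (u v : V) : ℝ :=
  if π.symm u < π.symm v then ξ else 1 - ξ

theorem threshold_swap (ξ : ℝ) (π : Fin (Fintype.card V) ≃ V) {u v : V} (huv : u ≠ v) :
    threshold ξ π v u = 1 - threshold ξ π u v := by
  have hne : π.symm u ≠ π.symm v := π.symm.injective.ne huv
  unfold threshold
  split_ifs with h₁ h₂ h₂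
  · exact absurd h₁ (lt_asymm h₂)
  · ring
  · ring
  · exact absurd (le_antisymm (not_lt.1 h₁) (not_lt.1 h₂)) hne

theorem threshold_mem_Ioo {ξ : ℝ} (hξ : ξ ∈ Set.Ioo 0 1) (π : Fin (Fintype.card V) ≃ V)
    (u v : V) : threshold ξ π u v ∈ Set.Ioo 0 1 := by
  unfold threshold
  split_ifs <;> constructor <;> linarith [hξ.1, hξ.2]

theorem cdf_pair_lt_and_lt {ξ : ℝ} (hξ : ξ ∈ Set.Ioo 0 1) (π : Fin (Fintype.card V) ≃ V)
    {u v : V} (huv : u ≠ v) {t s : ℝ} (hts : t + s = 1)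
    (ht : threshold ξ π u v < t) :
    cdf (Pi.single u t + Pi.single v s) π (π.symm u) < ξ ∧
      ξ < cdf (Pi.single u t + Pi.single v s) π (π.symm u + 1) := by
  have : (π.symm u : ℕ) ≠ π.symm v := Fin.val_injective.ne (π.symm.injective.ne huv)
  simp only [cdf_add, cdf_single, threshold, Fin.lt_def] at ht ⊢
  obtain ⟨hξ0, hξ1⟩ := hξ
  split_ifs at ht ⊢ <;> first | omega | constructor <;> linarith

theorem cdf_three_lt_half_lt (π : Fin (Fintype.card V) ≃ V) {a b c : V}
    (hb : π.symm b ∈ Set.uIoo (π.symm a) (π.symm c)) :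
    cdf (Pi.single a (1 / 3) + Pi.single b (1 / 3) + Pi.single c (1 / 3)) π (π.symm b) < 1 / 2 ∧
      1 / 2 < cdf (Pi.single a (1 / 3) + Pi.single b (1 / 3) + Pi.single c (1 / 3)) π
        (π.symm b + 1) := by
  simp only [cdf_add, cdf_single]
  rw [Set.uIoo_eq_union] at hb
  rcases hb with ⟨h₁, h₂⟩ | ⟨h₁, h₂⟩ <;> rw [Fin.lt_def] at h₁ h₂ <;>
    split_ifs <;> first | omega | norm_num

end Selection

section Measure

variable [Fintype V]

theorem hausdorffMeasure_isOpen_inter_sum_eq_one_pos {U : Set (V → ℝ)} (hU : IsOpen U)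
    {p : V → ℝ} (hpU : p ∈ U) (hp : ∑ v, p v = 1) :
    0 < μH[(Fintype.card V - 1 : ℝ)] (U ∩ {q | ∑ v, q v = 1}) := by
  obtain ⟨v₀⟩ : Nonempty V := by
    by_contra hV
    rw [not_nonempty_iff] at hV
    simp at hp
  let restrict : (V → ℝ) → ({v // v ≠ v₀} → ℝ) := fun q w => q w
  let extend : ({v // v ≠ v₀} → ℝ) → (V → ℝ) := fun t v =>
    if h : v = v₀ then 1 - ∑ w, t w else t ⟨v, h⟩
  have extend_of_ne : ∀ t (w : {v // v ≠ v₀}), extend t w = t w := fun t w => dif_neg w.2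
  have sum_extend : ∀ t, ∑ v, extend t v = 1 := fun t => by
    rw [Fintype.sum_eq_add_sum_subtype_ne _ v₀]
    simp only [extend_of_ne]
    simp only [extend, dif_pos]
    ring
  have extend_restrict : extend (restrict p) = p := funext fun v => by
    by_cases h : v = v₀
    · subst h
      simp only [extend, restrict, dif_pos rfl]
      rw [Fintype.sum_eq_add_sum_subtype_ne _ v] at hp
      linarith
    · simp [extend, restrict, h]
  have hextend : Continuous extend := continuous_pi fun v => by
    by_cases h : v = v₀ <;> simp only [extend, h, dite_true, dite_false] <;> fun_prop
  have hrestrict : LipschitzWith 1 restrict :=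
    LipschitzWith.of_dist_le_mul fun q q' => by
      rw [NNReal.coe_one, one_mul]
      exact (dist_pi_le_iff dist_nonneg).2 fun w => dist_le_pi_dist q q' (w : V)
  have hO : IsOpen (extend ⁻¹' U) := hU.preimage hextend
  have hcard : (Fintype.card V - 1 : ℝ) = Fintype.card {v // v ≠ v₀} := by
    rw [Fintype.card_subtype_compl, Fintype.card_subtype_eq,
      Nat.cast_sub (Fintype.card_pos_iff.2 ⟨v₀⟩)]
    simp
  calc 0 < volume (extend ⁻¹' U) := hO.measure_pos volume ⟨restrict p, by simpa [extend_restrict]⟩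
    _ = μH[(Fintype.card V - 1 : ℝ)] (extend ⁻¹' U) := by rw [hcard, hausdorffMeasure_pi_real]
    _ ≤ μH[(Fintype.card V - 1 : ℝ)] (restrict '' (U ∩ {q | ∑ v, q v = 1})) :=
      measure_mono fun t ht => ⟨extend t, ⟨ht, sum_extend t⟩, funext (extend_of_ne t)⟩
    _ ≤ μH[(Fintype.card V - 1 : ℝ)] (U ∩ {q | ∑ v, q v = 1}) := by
      simpa using hrestrict.hausdorffMeasure_image_le (by rw [hcard]; positivity) _

open Filter Topology in
theorem exists_pos_sum_eq_one_mem_of_isOpen {W : Set (V → ℝ)} (hW : IsOpen W) {p : V → ℝ}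
    (hpW : p ∈ W) (hp : p ∈ stdSimplex ℝ V) :
    ∃ q ∈ W, (∀ v, 0 < q v) ∧ ∑ v, q v = 1 := by
  have hcard : (Fintype.card V : ℝ) ≠ 0 := by
    have := hp.2
    contrapose! this
    simp_all [Fintype.card_eq_zero_iff]
  let c : V → ℝ := fun _ => (Fintype.card V : ℝ)⁻¹
  let seg : ℝ → V → ℝ := fun δ => (1 - δ) • p + δ • c
  have hseg : ∀ᶠ δ in 𝓝[>] 0, seg δ ∈ W := nhdsWithin_le_nhds <|
    (show Continuous seg by fun_prop).continuousAt.preimage_mem_nhds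
      (hW.mem_nhds (by simpa [seg] using hpW))
  obtain ⟨δ, hδW, hδ0, hδ1⟩ := (hseg.and (Ioo_mem_nhdsGT one_pos)).exists
  refine ⟨seg δ, hδW, fun v => ?_, ?_⟩
  · have : 0 < δ * (Fintype.card V : ℝ)⁻¹ := mul_pos hδ0 (by positivity)
    have := mul_nonneg (sub_pos.2 hδ1).le (hp.1 v)
    simp only [seg, c, Pi.add_apply, Pi.smul_apply, smul_eq_mul]
    linarith
  · simp only [seg, c, Pi.add_apply, Pi.smul_apply, smul_eq_mul, Finset.sum_add_distrib,
      ← Finset.mul_sum, hp.2, Finset.sum_const, Finset.card_univ, nsmul_eq_mul]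
    field_simp
    ring

theorem hausdorffMeasure_isOpen_inter_stdSimplex_pos {W : Set (V → ℝ)} (hW : IsOpen W)
    {p : V → ℝ} (hpW : p ∈ W) (hp : p ∈ stdSimplex ℝ V) :
    0 < μH[(Fintype.card V - 1 : ℝ)] (W ∩ stdSimplex ℝ V) := by
  obtain ⟨q, hqW, hq0, hq1⟩ := exists_pos_sum_eq_one_mem_of_isOpen hW hpW hp
  have hU : IsOpen (W ∩ {q | ∀ v, 0 < q v}) := hW.inter <| by
    simpa only [Set.ofPred_forall] using isOpen_iInter_of_finite fun v =>
      isOpen_lt continuous_const (continuous_apply v)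
  refine (hausdorffMeasure_isOpen_inter_sum_eq_one_pos hU ⟨hqW, hq0⟩ hq1).trans_le ?_
  exact measure_mono fun r ⟨⟨hrW, hr0⟩, hr1⟩ => ⟨hrW, fun v => (hr0 v).le, hr1⟩

end Measure

section Agreement

variable [Fintype V] [Nonempty V]

def SelEqAE (ξ : ℝ) (π : Fin (Fintype.card V) ≃ V) (ξh : ℝ) (πh : Fin (Fintype.card V) ≃ V) :
    Prop :=
  ∃ N : Set (V → ℝ), μH[(Fintype.card V - 1 : ℝ)] N = 0 ∧
    ∀ p ∈ stdSimplex ℝ V, p ∉ N → sel p ξ π = sel p ξh πh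

variable {ξ ξh : ℝ} {π πh : Fin (Fintype.card V) ≃ V}

theorem SelEqAE.symm (h : SelEqAE ξ π ξh πh) : SelEqAE ξh πh ξ π :=
  let ⟨N, hN, hsel⟩ := h
  ⟨N, hN, fun p hp hpN => (hsel p hp hpN).symm⟩

theorem SelEqAE.apply_eq_apply (h : SelEqAE ξ π ξh πh) {p₀ : V → ℝ} (hp₀ : p₀ ∈ stdSimplex ℝ V)
    {k m : Fin (Fintype.card V)}
    (hk : cdf p₀ π k < ξ ∧ ξ < cdf p₀ π (k + 1))
    (hm : cdf p₀ πh m < ξh ∧ ξh < cdf p₀ πh (m + 1)) : π k = πh m := by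
  obtain ⟨N, hN, hsel⟩ := h
  let W : Set (V → ℝ) := {p | (cdf p π k < ξ ∧ ξ < cdf p π (k + 1)) ∧
    (cdf p πh m < ξh ∧ ξh < cdf p πh (m + 1))}
  have hW : IsOpen W :=
    ((isOpen_lt (continuous_cdf π k) continuous_const).inter
      (isOpen_lt continuous_const (continuous_cdf π (k + 1)))).inter
    ((isOpen_lt (continuous_cdf πh m) continuous_const).inter
      (isOpen_lt continuous_const (continuous_cdf πh (m + 1))))
  obtain ⟨p, ⟨⟨hpk, hpm⟩, hp⟩, hpN⟩ : ((W ∩ stdSimplex ℝ V) \ N).Nonempty := by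
    refine nonempty_of_measure_ne_zero (μ := μH[(Fintype.card V - 1 : ℝ)]) ?_
    rw [measure_sdiff_null hN]
    exact (hausdorffMeasure_isOpen_inter_stdSimplex_pos hW ⟨hk, hm⟩ hp₀).ne'
  rw [← sel_eq_of_cdf_lt_of_le hp.1 hpk.1 hpk.2.le, ← sel_eq_of_cdf_lt_of_le hp.1 hpm.1 hpm.2.le]
  exact hsel p hp hpN

theorem SelEqAE.threshold_le (h : SelEqAE ξ π ξh πh) (hξ : ξ ∈ Set.Ioo 0 1)
    (hξh : ξh ∈ Set.Ioo 0 1) {u v : V} (huv : u ≠ v) :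
    threshold ξ π u v ≤ threshold ξh πh u v := by
  by_contra! hlt
  obtain ⟨t, hτh, hτ⟩ := exists_between hlt
  have ht0 := (threshold_mem_Ioo hξh πh u v).1.trans hτh
  have ht1 := hτ.trans (threshold_mem_Ioo hξ π u v).2
  have hp : Pi.single u t + Pi.single v (1 - t) ∈ stdSimplex ℝ V := by
    refine ⟨fun w => add_nonneg ?_ ?_, by simp [Finset.sum_add_distrib]⟩ <;>
      simp only [Pi.single_apply] <;> split_ifs <;> linarith
  -- `πh` selects `u`, while `π` selects `v`.
  have hu := cdf_pair_lt_and_lt hξh πh huv (add_sub_cancel t 1) hτh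
  have hv := cdf_pair_lt_and_lt hξ π huv.symm (sub_add_cancel 1 t)
    (by rw [threshold_swap ξ π huv]; linarith)
  rw [add_comm] at hv
  exact huv (by simpa using (h.apply_eq_apply hp hv hu).symm)

theorem SelEqAE.threshold_eq (h : SelEqAE ξ π ξh πh) (hξ : ξ ∈ Set.Ioo 0 1)
    (hξh : ξh ∈ Set.Ioo 0 1) {u v : V} (huv : u ≠ v) :
    threshold ξ π u v = threshold ξh πh u v :=
  (h.threshold_le hξ hξh huv).antisymm (h.symm.threshold_le hξh hξ huv)

theorem SelEqAE.mem_uIoo (h : SelEqAE (1 / 2) π (1 / 2) πh) {a b c : V}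
    (hb : π.symm b ∈ Set.uIoo (π.symm a) (π.symm c)) :
    πh.symm b ∈ Set.uIoo (πh.symm a) (πh.symm c) := by
  have not_mem : ∀ {a b c : V}, π.symm b ∈ Set.uIoo (π.symm a) (π.symm c) →
      πh.symm a ∉ Set.uIoo (πh.symm b) (πh.symm c) := by
    intro a b c hb ha
    have hp : Pi.single a (1 / 3) + Pi.single b (1 / 3) + Pi.single c (1 / 3) ∈
        stdSimplex ℝ V := by
      refine ⟨fun w => add_nonneg (add_nonneg ?_ ?_) ?_, by simp [Finset.sum_add_distrib]; norm_num⟩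
        <;> simp only [Pi.single_apply] <;> split_ifs <;> norm_num
    have hba := h.apply_eq_apply hp (cdf_three_lt_half_lt π hb)
      (add_comm (Pi.single b (1 / 3) : V → ℝ) (Pi.single a (1 / 3)) ▸ cdf_three_lt_half_lt πh ha)
    simp only [Equiv.apply_symm_apply] at hba
    exact Set.left_notMem_uIoo (hba ▸ hb)
  have ha := not_mem hb
  have hc := not_mem (Set.uIoo_comm (π.symm a) _ ▸ hb)
  have hab : πh.symm a ≠ πh.symm b := πh.symm.injective.ne fun hab => by simp [hab] at hb
  have hbc : πh.symm b ≠ πh.symm c := πh.symm.injective.ne fun hbc => by simp [hbc] at hb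
  have hac : πh.symm a ≠ πh.symm c := πh.symm.injective.ne fun hac => by simp [hac] at hb
  simp only [Set.uIoo_eq_union, Set.mem_union, Set.mem_Ioo, Fin.lt_def, ne_eq, Fin.ext_iff]
    at ha hc hab hbc hac ⊢
  omega

theorem SelEqAE.eq_ite_of_lt (h : SelEqAE ξ π ξh πh) (hξ : ξ ∈ Set.Ioo 0 1)
    (hξh : ξh ∈ Set.Ioo 0 1) {i j : Fin (Fintype.card V)} (hij : i < j) :
    ξ = if π.trans πh.symm i < π.trans πh.symm j then ξh else 1 - ξh := by
  have := h.threshold_eq hξ hξh (π.injective.ne hij.ne)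
  simp only [threshold, Equiv.symm_apply_apply, if_pos hij] at this
  convert this using 2
  exact Iff.rfl

theorem SelEqAE.strictMono_or_strictAnti (h : SelEqAE ξ π ξh πh) (hξ : ξ ∈ Set.Ioo 0 1)
    (hξh : ξh ∈ Set.Ioo 0 1) (hV : 2 ≤ Fintype.card V) :
    StrictMono (π.trans πh.symm) ∨ StrictAnti (π.trans πh.symm) := by
  by_cases hhalf : ξh = 1 / 2
  · have h01 : (⟨0, by omega⟩ : Fin (Fintype.card V)) < ⟨1, by omega⟩ := Fin.mk_lt_mk.2 one_pos
    obtain rfl : ξ = 1 / 2 := by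
      have := h.eq_ite_of_lt hξ hξh h01
      split_ifs at this <;> linarith
    subst hhalf
    refine Fin.strictMono_or_strictAnti_of_mem_uIoo (π.trans πh.symm).injective
      fun i j k hij hjk => h.mem_uIoo (a := π i) (b := π j) (c := π k) ?_
    simpa using Set.mem_uIoo_of_lt hij hjk
  · have hord : ∀ i j, i < j → (π.trans πh.symm i < π.trans πh.symm j ↔ ξ = ξh) := by
      intro i j hij
      rw [h.eq_ite_of_lt hξ hξh hij]
      split_ifs with hlt
      · simpa using hlt
      · simp only [hlt, false_iff]
        intro heq
        exact hhalf (by linarith)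
    by_cases heq : ξ = ξh
    · exact Or.inl fun i j hij => (hord i j hij).2 heq
    · exact Or.inr fun i j hij =>
        (not_lt.1 (mt (hord i j hij).1 heq)).lt_of_ne ((π.trans πh.symm).injective.ne hij.ne')

end Agreement

/-- main identifiability theorem: if the two parameterizations agree
for almost every distribution on the simplex (w.r.t. its natural
`(|V|-1)`-dimensional measure), then either the parameters coincide, or the
permutation is reversed and the key is complemented. -/
theorem stmt7 [Fintype V] [Nonempty V] (h3 : 3 ≤ Fintype.card V)
    (ξ ξh : ℝ) (hξ0 : 0 < ξ) (hξ1 : ξ < 1) (hξh0 : 0 < ξh) (hξh1 : ξh < 1)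
    (π πh : Fin (Fintype.card V) ≃ V)
    (h : ∃ N : Set (V → ℝ), μH[(Fintype.card V - 1 : ℝ)] N = 0 ∧
      ∀ p ∈ stdSimplex ℝ V, p ∉ N → sel p ξ π = sel p ξh πh) :
    (π = πh ∧ ξ = ξh) ∨ (π = revp πh ∧ ξ = 1 - ξh) := by
  have hsel : SelEqAE ξ π ξh πh := h
  have hξ : ξ ∈ Set.Ioo 0 1 := ⟨hξ0, hξ1⟩
  have hξh : ξh ∈ Set.Ioo 0 1 := ⟨hξh0, hξh1⟩
  have h01 : (⟨0, by omega⟩ : Fin (Fintype.card V)) < ⟨1, by omega⟩ := Fin.mk_lt_mk.2 one_pos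
  have hkey := hsel.eq_ite_of_lt hξ hξh h01
  rcases hsel.strictMono_or_strictAnti hξ hξh (by omega) with hmono | hanti
  · rw [if_pos (hmono h01)] at hkey
    exact Or.inl ⟨Equiv.eq_of_strictMono_trans_symm hmono, hkey⟩
  · rw [if_neg (hanti h01).not_gt] at hkey
    exact Or.inr ⟨eq_revp_of_strictAnti hanti, hkey⟩
end
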